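/- Let λ_k be a triple eigenvalue (cλ_k+d ≠ 0) with chain y_k, y_{k+1}, y_{k+2} and let y_n be an eigenfunction for λ_n ≠ λ_k with cλ_n+d ≠ 0. Then ∫₀¹ y_{k+2} y_n dx = -(ad-bc)·( y_{k+2}(1)/(cλ_k+d) - c·y_{k+1}(1)/(cλ_k+d)² + c²·y_k(1)/(cλ_k+d)³ ) · y_n(1)/(cλ_n+d). -/

import Mathlib

open MeasureTheory Set

/-- Lagrange-type identity: if `-f'' + q f = lam f + r` and `-g'' + q g = lamn g` on `[0,1]`,
then `(lamn - lam) ∫ f g - ∫ r g = [f' g - f g']₀¹`. -/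
lemma sl_aux (q : ℝ → ℝ) (lam lamn : ℝ) (f f' f'' g g' g'' r : ℝ → ℝ)
    (hf : ∀ x ∈ Icc (0:ℝ) 1, HasDerivAt f (f' x) x)
    (hf' : ∀ x ∈ Icc (0:ℝ) 1, HasDerivAt f' (f'' x) x)
    (hg : ∀ x ∈ Icc (0:ℝ) 1, HasDerivAt g (g' x) x)
    (hg' : ∀ x ∈ Icc (0:ℝ) 1, HasDerivAt g' (g'' x) x)
    (hr : ContinuousOn r (Icc (0:ℝ) 1))
    (hodef : ∀ x ∈ Icc (0:ℝ) 1, -f'' x + q x * f x = lam * f x + r x)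
    (hodeg : ∀ x ∈ Icc (0:ℝ) 1, -g'' x + q x * g x = lamn * g x) :
    (lamn - lam) * (∫ x in (0:ℝ)..1, f x * g x) - (∫ x in (0:ℝ)..1, r x * g x)
      = (f' 1 * g 1 - f 1 * g' 1) - (f' 0 * g 0 - f 0 * g' 0) := by
  have huIcc : uIcc (0:ℝ) 1 = Icc (0:ℝ) 1 := uIcc_of_le zero_le_one
  have hfc : ContinuousOn f (Icc (0:ℝ) 1) :=
    fun x hx => (hf x hx).continuousAt.continuousWithinAt
  have hgc : ContinuousOn g (Icc (0:ℝ) 1) :=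
    fun x hx => (hg x hx).continuousAt.continuousWithinAt
  -- the integrand of the derivative of the Wronskian-type function
  have hW : ∀ x ∈ uIcc (0:ℝ) 1,
      HasDerivAt (fun x => f' x * g x - f x * g' x)
        ((lamn - lam) * (f x * g x) - r x * g x) x := by
    intro x hx
    rw [huIcc] at hx
    have h1 := ((hf' x hx).mul (hg x hx)).sub ((hf x hx).mul (hg' x hx))
    have e1 := hodef x hx
    have e2 := hodeg x hx
    refine h1.congr_deriv ?_
    have hf2 : f'' x = q x * f x - lam * f x - r x := by linarith
    have hg2 : g'' x = q x * g x - lamn * g x := by linarith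
    rw [hf2, hg2]; ring
  have hcont : ContinuousOn (fun x => (lamn - lam) * (f x * g x) - r x * g x)
      (uIcc (0:ℝ) 1) := by
    rw [huIcc]
    exact (continuousOn_const.mul (hfc.mul hgc)).sub (hr.mul hgc)
  have hint : IntervalIntegrable (fun x => (lamn - lam) * (f x * g x) - r x * g x)
      volume 0 1 := hcont.intervalIntegrable
  have key := intervalIntegral.integral_eq_sub_of_hasDerivAt hW hint
  have hfg : IntervalIntegrable (fun x => f x * g x) volume 0 1 := by
    apply ContinuousOn.intervalIntegrable; rw [huIcc]; exact hfc.mul hgc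
  have hrg : IntervalIntegrable (fun x => r x * g x) volume 0 1 := by
    apply ContinuousOn.intervalIntegrable; rw [huIcc]; exact hr.mul hgc
  rw [intervalIntegral.integral_sub (hfg.const_mul _) hrg,
    intervalIntegral.integral_const_mul] at key
  simpa using key

theorem second_assoc_inner_product
    (a b c d β : ℝ) (habcd : a * d - b * c < 0) (hac : a * c ≠ 0)
    (hβ0 : 0 ≤ β) (hβπ : β < Real.pi)
    (q : ℝ → ℝ) (hq : ContinuousOn q (Icc (0:ℝ) 1))
    (lam lamn : ℝ) (hcd : c * lam + d ≠ 0) (hcdn : c * lamn + d ≠ 0) (hne : lamn ≠ lam)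
    (y0 y0' y0'' y1 y1' y1'' : ℝ → ℝ)
    (hy0 : ∀ x ∈ Icc (0:ℝ) 1, HasDerivAt y0 (y0' x) x)
    (hy0' : ∀ x ∈ Icc (0:ℝ) 1, HasDerivAt y0' (y0'' x) x)
    (hy0'' : ContinuousOn y0'' (Icc (0:ℝ) 1))
    (hy1 : ∀ x ∈ Icc (0:ℝ) 1, HasDerivAt y1 (y1' x) x)
    (hy1' : ∀ x ∈ Icc (0:ℝ) 1, HasDerivAt y1' (y1'' x) x)
    (hy1'' : ContinuousOn y1'' (Icc (0:ℝ) 1))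
    (hode0 : ∀ x ∈ Icc (0:ℝ) 1, -y0'' x + q x * y0 x = lam * y0 x)
    (hode1 : ∀ x ∈ Icc (0:ℝ) 1, -y1'' x + q x * y1 x = lam * y1 x + y0 x)
    (hbc00 : y0 0 * Real.cos β = y0' 0 * Real.sin β)
    (hbc01 : y1 0 * Real.cos β = y1' 0 * Real.sin β)
    (hbc10 : (a * lam + b) * y0 1 = (c * lam + d) * y0' 1)
    (hbc11 : (a * lam + b) * y1 1 + a * y0 1 = (c * lam + d) * y1' 1 + c * y0' 1)
    (y2 y2' y2'' : ℝ → ℝ)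
    (hy2 : ∀ x ∈ Icc (0:ℝ) 1, HasDerivAt y2 (y2' x) x)
    (hy2' : ∀ x ∈ Icc (0:ℝ) 1, HasDerivAt y2' (y2'' x) x)
    (hy2'' : ContinuousOn y2'' (Icc (0:ℝ) 1))
    (hode2 : ∀ x ∈ Icc (0:ℝ) 1, -y2'' x + q x * y2 x = lam * y2 x + y1 x)
    (hbc02 : y2 0 * Real.cos β = y2' 0 * Real.sin β)
    (hbc12 : (a * lam + b) * y2 1 + a * y1 1 = (c * lam + d) * y2' 1 + c * y1' 1)
    (yn yn' yn'' : ℝ → ℝ)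
    (hyn : ∀ x ∈ Icc (0:ℝ) 1, HasDerivAt yn (yn' x) x)
    (hyn' : ∀ x ∈ Icc (0:ℝ) 1, HasDerivAt yn' (yn'' x) x)
    (hyn'' : ContinuousOn yn'' (Icc (0:ℝ) 1))
    (hoden : ∀ x ∈ Icc (0:ℝ) 1, -yn'' x + q x * yn x = lamn * yn x)
    (hbc0n : yn 0 * Real.cos β = yn' 0 * Real.sin β)
    (hbc1n : (a * lamn + b) * yn 1 = (c * lamn + d) * yn' 1)
    :
    ∫ x in (0:ℝ)..1, y2 x * yn x
      = -(a * d - b * c) * (y2 1 / (c * lam + d) - c * y1 1 / (c * lam + d) ^ 2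
            + c ^ 2 * y0 1 / (c * lam + d) ^ 3)
          * (yn 1 / (c * lamn + d)) := by
  have hμ : lamn - lam ≠ 0 := sub_ne_zero.mpr hne
  have hc0 : ContinuousOn y0 (Icc (0:ℝ) 1) :=
    fun x hx => (hy0 x hx).continuousAt.continuousWithinAt
  have hc1 : ContinuousOn y1 (Icc (0:ℝ) 1) :=
    fun x hx => (hy1 x hx).continuousAt.continuousWithinAt
  -- boundary terms at 0 vanish
  have hW00 : y0' 0 * yn 0 - y0 0 * yn' 0 = 0 := by
    linear_combination (-(Real.sin β) * yn 0 - Real.cos β * yn' 0) * hbc00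
      + (Real.sin β * y0 0 + Real.cos β * y0' 0) * hbc0n
      - (y0' 0 * yn 0 - y0 0 * yn' 0) * (Real.sin_sq_add_cos_sq β)
  have hW10 : y1' 0 * yn 0 - y1 0 * yn' 0 = 0 := by
    linear_combination (-(Real.sin β) * yn 0 - Real.cos β * yn' 0) * hbc01
      + (Real.sin β * y1 0 + Real.cos β * y1' 0) * hbc0n
      - (y1' 0 * yn 0 - y1 0 * yn' 0) * (Real.sin_sq_add_cos_sq β)
  have hW20 : y2' 0 * yn 0 - y2 0 * yn' 0 = 0 := by
    linear_combination (-(Real.sin β) * yn 0 - Real.cos β * yn' 0) * hbc02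
      + (Real.sin β * y2 0 + Real.cos β * y2' 0) * hbc0n
      - (y2' 0 * yn 0 - y2 0 * yn' 0) * (Real.sin_sq_add_cos_sq β)
  -- Lagrange identities
  have E0 := sl_aux q lam lamn y0 y0' y0'' yn yn' yn'' (fun _ => 0)
    hy0 hy0' hyn hyn' continuousOn_const
    (fun x hx => by have := hode0 x hx; simpa using this) hoden
  simp only [zero_mul, intervalIntegral.integral_zero, sub_zero] at E0
  have E1 := sl_aux q lam lamn y1 y1' y1'' yn yn' yn'' y0
    hy1 hy1' hyn hyn' hc0 hode1 hoden
  have E2 := sl_aux q lam lamn y2 y2' y2'' yn yn' yn'' y1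
    hy2 hy2' hyn hyn' hc1 hode2 hoden
  set I0 := ∫ x in (0:ℝ)..1, y0 x * yn x with hI0def
  set I1 := ∫ x in (0:ℝ)..1, y1 x * yn x with hI1def
  set I2 := ∫ x in (0:ℝ)..1, y2 x * yn x with hI2def
  have hI0 : (c*lam+d) * (c*lamn+d) * I0 = -(a*d-b*c) * (y0 1 * yn 1) := by
    apply mul_left_cancel₀ hμ
    linear_combination ((c*lam+d)*(c*lamn+d)) * E0
      - ((c*lamn+d) * yn 1) * hbc10 + ((c*lam+d) * y0 1) * hbc1n
      - ((c*lam+d)*(c*lamn+d)) * hW00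
  have hI1 : (c*lam+d)^2 * (c*lamn+d) * I1
      = -(a*d-b*c) * (((c*lam+d) * y1 1 - c * y0 1) * yn 1) := by
    apply mul_left_cancel₀ hμ
    linear_combination ((c*lam+d)^2*(c*lamn+d)) * E1 + (c*lam+d) * hI0
      - ((c*lam+d)*(c*lamn+d)*yn 1) * hbc11 + (c*(c*lamn+d)*yn 1) * hbc10
      + ((c*lam+d)^2 * y1 1) * hbc1n
      - ((c*lam+d)^2*(c*lamn+d)) * hW10
  have hI2 : (c*lam+d)^3 * (c*lamn+d) * I2
      = -(a*d-b*c) * (((c*lam+d)^2 * y2 1 - c * (c*lam+d) * y1 1 + c^2 * y0 1) * yn 1) := by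
    apply mul_left_cancel₀ hμ
    linear_combination ((c*lam+d)^3*(c*lamn+d)) * E2 + (c*lam+d) * hI1
      - ((c*lam+d)^2*(c*lamn+d)*yn 1) * hbc12 + (c*(c*lam+d)*(c*lamn+d)*yn 1) * hbc11
      - (c^2*(c*lamn+d)*yn 1) * hbc10
      + ((c*lam+d)^3 * y2 1) * hbc1n
      - ((c*lam+d)^3*(c*lamn+d)) * hW20
  have hrhs : -(a * d - b * c) * (y2 1 / (c * lam + d) - c * y1 1 / (c * lam + d) ^ 2
        + c ^ 2 * y0 1 / (c * lam + d) ^ 3) * (yn 1 / (c * lamn + d))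
      = (-(a*d-b*c) * (((c*lam+d)^2 * y2 1 - c*(c*lam+d) * y1 1 + c^2 * y0 1) * yn 1))
        / ((c*lam+d)^3 * (c*lamn+d)) := by
    field_simp
  rw [hrhs, eq_div_iff (mul_ne_zero (pow_ne_zero 3 hcd) hcdn)]
  linear_combination hI2
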